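/- Absolute contractivity of discrete-time Lur'e systems. Let A ∈ ℝ^{n×n}, B ∈ ℝ^{n×m}, H ∈ ℝ^{m×n}, let P ∈ ℝ^{n×n} be symmetric positive definite, let ρ ∈ [0,1), let M ∈ ℝ^{2m×2m} be a symmetric incremental multiplier for Ψ : ℝᵐ → ℝᵐ, and define M_H = [[H, 0],[0, I_m]]ᵀ M [[H, 0],[0, I_m]]. If the block matrix [[AᵀPA − ρ²P, AᵀPB],[BᵀPA, BᵀPB]] + M_H is negative semidefinite, then the map F(x) = Ax + BΨ(Hx) satisfies (F(x) − F(x̃))ᵀ P (F(x) − F(x̃)) ≤ ρ² (x − x̃)ᵀ P (x − x̃) for all x, x̃ ∈ ℝⁿ; equivalently, ‖F(x) − F(x̃)‖_P ≤ ρ ‖x − x̃‖_P, i.e., the discrete-time system x⁺ = Ax + BΨ(Hx) is strongly contracting with factor ρ in ‖·‖_P. -/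

import Mathlib

open Matrix

/-- The `P`-weighted quadratic norm `‖v‖_P = √(vᵀ P v)`. -/
noncomputable def pnorm {n : ℕ} (P : Matrix (Fin n) (Fin n) ℝ) (v : Fin n → ℝ) : ℝ :=
  Real.sqrt (v ⬝ᵥ P *ᵥ v)

/-!
The LMI says that the quadratic form `(e, w) ↦ ‖Ae + Bw‖²_P - ρ²‖e‖²_P + (He, w)ᵀ M (He, w)` is
nonpositive. Evaluated at `e = x - x̃` and `w = Ψ(Hx) - Ψ(Hx̃)`, we have `Ae + Bw = F x - F x̃`
and the multiplier term is nonnegative, so `‖F x - F x̃‖²_P ≤ ρ²‖x - x̃‖²_P`.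
-/

section QuadraticForms

variable {ι κ ν R : Type*} [Fintype ι] [Fintype κ] [Fintype ν] [CommRing R]

theorem dotProduct_transpose_mul_mul_mulVec (u : ι → R) (G : Matrix ν ι R) (M : Matrix ν ν R)
    (K : Matrix ν κ R) (v : κ → R) :
    u ⬝ᵥ (Gᵀ * M * K) *ᵥ v = (G *ᵥ u) ⬝ᵥ M *ᵥ (K *ᵥ v) := by
  rw [← mulVec_mulVec, ← mulVec_mulVec, dotProduct_mulVec, vecMul_transpose]

theorem sumElim_dotProduct_fromBlocks_mulVec (A : Matrix ι ι R) (B : Matrix ι κ R)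
    (C : Matrix κ ι R) (D : Matrix κ κ R) (e : ι → R) (w : κ → R) :
    Sum.elim e w ⬝ᵥ fromBlocks A B C D *ᵥ Sum.elim e w
      = e ⬝ᵥ A *ᵥ e + e ⬝ᵥ B *ᵥ w + (w ⬝ᵥ C *ᵥ e + w ⬝ᵥ D *ᵥ w) := by
  simp only [fromBlocks_mulVec, Sum.elim_comp_inl, Sum.elim_comp_inr,
    sumElim_dotProduct_sumElim, dotProduct_add]

theorem fromBlocks_zero_one_mulVec_sumElim [DecidableEq κ] (H : Matrix κ ι R) (e : ι → R)
    (w : κ → R) :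
    fromBlocks H 0 0 1 *ᵥ Sum.elim e w = Sum.elim (H *ᵥ e) w := by
  simp [fromBlocks_mulVec]

theorem sumElim_dotProduct_lureBlocks_mulVec (A P : Matrix ι ι R) (B : Matrix ι κ R) (c : R)
    (e : ι → R) (w : κ → R) :
    Sum.elim e w ⬝ᵥ
        fromBlocks (Aᵀ * P * A - c • P) (Aᵀ * P * B) (Bᵀ * P * A) (Bᵀ * P * B) *ᵥ Sum.elim e w
      = (A *ᵥ e + B *ᵥ w) ⬝ᵥ P *ᵥ (A *ᵥ e + B *ᵥ w) - c * (e ⬝ᵥ P *ᵥ e) := by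
  simp only [sumElim_dotProduct_fromBlocks_mulVec, sub_mulVec, smul_mulVec, dotProduct_sub,
    dotProduct_smul, dotProduct_transpose_mul_mul_mulVec, mulVec_add, dotProduct_add,
    add_dotProduct, smul_eq_mul]
  ring

end QuadraticForms

theorem lure_dotProduct_mulVec_le {ι κ : Type*} [Fintype ι] [Fintype κ] [DecidableEq κ]
    (A P : Matrix ι ι ℝ) (B : Matrix ι κ ℝ) (H : Matrix κ ι ℝ) (M : Matrix (κ ⊕ κ) (κ ⊕ κ) ℝ)
    (c : ℝ)
    (hLMI : (-(fromBlocks (Aᵀ * P * A - c • P) (Aᵀ * P * B) (Bᵀ * P * A) (Bᵀ * P * B) +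
        (fromBlocks H (0 : Matrix κ κ ℝ) (0 : Matrix κ ι ℝ) (1 : Matrix κ κ ℝ))ᵀ * M *
          fromBlocks H (0 : Matrix κ κ ℝ) (0 : Matrix κ ι ℝ) (1 : Matrix κ κ ℝ))).PosSemidef)
    (e : ι → ℝ) (w : κ → ℝ) (hM : 0 ≤ Sum.elim (H *ᵥ e) w ⬝ᵥ M *ᵥ Sum.elim (H *ᵥ e) w) :
    (A *ᵥ e + B *ᵥ w) ⬝ᵥ P *ᵥ (A *ᵥ e + B *ᵥ w) ≤ c * (e ⬝ᵥ P *ᵥ e) := by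
  have hneg := hLMI.dotProduct_mulVec_nonneg (Sum.elim e w)
  rw [star_trivial, neg_mulVec, dotProduct_neg, add_mulVec, dotProduct_add,
    sumElim_dotProduct_lureBlocks_mulVec, dotProduct_transpose_mul_mul_mulVec,
    fromBlocks_zero_one_mulVec_sumElim] at hneg
  linarith

theorem pnorm_le_of_dotProduct_mulVec_le {n : ℕ} (P : Matrix (Fin n) (Fin n) ℝ)
    {u v : Fin n → ℝ} {ρ : ℝ} (hρ : 0 ≤ ρ) (h : u ⬝ᵥ P *ᵥ u ≤ ρ ^ 2 * (v ⬝ᵥ P *ᵥ v)) :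
    pnorm P u ≤ ρ * pnorm P v := by
  calc pnorm P u ≤ Real.sqrt (ρ ^ 2 * (v ⬝ᵥ P *ᵥ v)) := Real.sqrt_le_sqrt h
    _ = ρ * pnorm P v := by rw [Real.sqrt_mul (sq_nonneg ρ), Real.sqrt_sq hρ, pnorm]

theorem lure_disc_contraction_general
    {n m : ℕ}
    (A : Matrix (Fin n) (Fin n) ℝ) (B : Matrix (Fin n) (Fin m) ℝ)
    (H : Matrix (Fin m) (Fin n) ℝ)
    (P : Matrix (Fin n) (Fin n) ℝ)
    (ρ : ℝ) (hρ0 : 0 ≤ ρ)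
    (M : Matrix (Fin m ⊕ Fin m) (Fin m ⊕ Fin m) ℝ)
    (Ψ : (Fin m → ℝ) → (Fin m → ℝ))
    -- M is an incremental multiplier for Ψ
    (hmult : ∀ x xt : Fin m → ℝ,
      0 ≤ (Sum.elim (x - xt) (Ψ x - Ψ xt)) ⬝ᵥ M *ᵥ (Sum.elim (x - xt) (Ψ x - Ψ xt)))
    -- the LMI condition
    (hLMI : (-(fromBlocks (Aᵀ * P * A - (ρ^2) • P) (Aᵀ * P * B) (Bᵀ * P * A) (Bᵀ * P * B) +
        (fromBlocks H (0 : Matrix (Fin m) (Fin m) ℝ)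
            (0 : Matrix (Fin m) (Fin n) ℝ) (1 : Matrix (Fin m) (Fin m) ℝ))ᵀ * M *
          fromBlocks H (0 : Matrix (Fin m) (Fin m) ℝ)
            (0 : Matrix (Fin m) (Fin n) ℝ) (1 : Matrix (Fin m) (Fin m) ℝ))).PosSemidef) :
    ∀ x xt : Fin n → ℝ,
      ((A *ᵥ x + B *ᵥ Ψ (H *ᵥ x)) - (A *ᵥ xt + B *ᵥ Ψ (H *ᵥ xt))) ⬝ᵥ
          P *ᵥ ((A *ᵥ x + B *ᵥ Ψ (H *ᵥ x)) - (A *ᵥ xt + B *ᵥ Ψ (H *ᵥ xt))) ≤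
        ρ^2 * ((x - xt) ⬝ᵥ P *ᵥ (x - xt)) ∧
      pnorm P ((A *ᵥ x + B *ᵥ Ψ (H *ᵥ x)) - (A *ᵥ xt + B *ᵥ Ψ (H *ᵥ xt))) ≤
        ρ * pnorm P (x - xt) := by
  intro x xt
  have hdiff : (A *ᵥ x + B *ᵥ Ψ (H *ᵥ x)) - (A *ᵥ xt + B *ᵥ Ψ (H *ᵥ xt))
      = A *ᵥ (x - xt) + B *ᵥ (Ψ (H *ᵥ x) - Ψ (H *ᵥ xt)) := by
    rw [mulVec_sub, mulVec_sub]; abel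
  have hquad := lure_dotProduct_mulVec_le A P B H M (ρ ^ 2) hLMI (x - xt)
    (Ψ (H *ᵥ x) - Ψ (H *ᵥ xt)) (by simpa only [mulVec_sub] using hmult (H *ᵥ x) (H *ᵥ xt))
  rw [hdiff]
  exact ⟨hquad, pnorm_le_of_dotProduct_mulVec_le P hρ0 hquad⟩

/-- Absolute contractivity of discrete-time Lur'e systems. -/
theorem lure_disc_contraction
    {n m : ℕ}
    (A : Matrix (Fin n) (Fin n) ℝ) (B : Matrix (Fin n) (Fin m) ℝ)
    (H : Matrix (Fin m) (Fin n) ℝ)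
    (P : Matrix (Fin n) (Fin n) ℝ) (hPs : P.IsSymm) (hP : P.PosDef)
    (ρ : ℝ) (hρ0 : 0 ≤ ρ) (hρ1 : ρ < 1)
    (M : Matrix (Fin m ⊕ Fin m) (Fin m ⊕ Fin m) ℝ) (hMs : M.IsSymm)
    (Ψ : (Fin m → ℝ) → (Fin m → ℝ))
    -- M is an incremental multiplier for Ψ
    (hmult : ∀ x xt : Fin m → ℝ,
      0 ≤ (Sum.elim (x - xt) (Ψ x - Ψ xt)) ⬝ᵥ M *ᵥ (Sum.elim (x - xt) (Ψ x - Ψ xt)))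
    -- the LMI condition
    (hLMI : (-(fromBlocks (Aᵀ * P * A - (ρ^2) • P) (Aᵀ * P * B) (Bᵀ * P * A) (Bᵀ * P * B) +
        (fromBlocks H (0 : Matrix (Fin m) (Fin m) ℝ)
            (0 : Matrix (Fin m) (Fin n) ℝ) (1 : Matrix (Fin m) (Fin m) ℝ))ᵀ * M *
          fromBlocks H (0 : Matrix (Fin m) (Fin m) ℝ)
            (0 : Matrix (Fin m) (Fin n) ℝ) (1 : Matrix (Fin m) (Fin m) ℝ))).PosSemidef) :
    ∀ x xt : Fin n → ℝ,
      ((A *ᵥ x + B *ᵥ Ψ (H *ᵥ x)) - (A *ᵥ xt + B *ᵥ Ψ (H *ᵥ xt))) ⬝ᵥ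
          P *ᵥ ((A *ᵥ x + B *ᵥ Ψ (H *ᵥ x)) - (A *ᵥ xt + B *ᵥ Ψ (H *ᵥ xt))) ≤
        ρ^2 * ((x - xt) ⬝ᵥ P *ᵥ (x - xt)) ∧
      pnorm P ((A *ᵥ x + B *ᵥ Ψ (H *ᵥ x)) - (A *ᵥ xt + B *ᵥ Ψ (H *ᵥ xt))) ≤
        ρ * pnorm P (x - xt) :=
  lure_disc_contraction_general A B H P ρ hρ0 M Ψ hmult hLMI
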